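/- arXiv:1312.3876 — 9 statements merged into one kernel-verified Lean document; each statement's English description precedes it below -/
import Mathlib

section
/- If f : [-1,1] → ℝ is convex and symmetric (f(x) = f(-x) for all x), then the function f⁺(d₁,d₂) = ((1+d₁d₂)/2)·f((d₁+d₂)/(1+d₁d₂)) + ((1-d₁d₂)/2)·f((d₁-d₂)/(1-d₁d₂)) is convex in d₁ for each fixed d₂ ∈ (-1,1). -/
/-! Each of the two terms is the perspective `(t, x) ↦ t f(x / t)` of `f`, evaluated at the affine
point `(t, x) = ((1 + d₁c) / 2, (d₁ + c) / 2)` with `c = ±d₂`. The perspective of a convex function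
is jointly convex, because `(a t + b u) f((a x + b y)/(a t + b u))` is `a t + b u` times `f` at the
convex combination of `x / t` and `y / u` with weights `a t / (a t + b u)`, `b u / (a t + b u)`;
so each term is convex in `d₁`, and so is their sum. -/

open Set

variable {E : Type*} [AddCommGroup E] [Module ℝ E]

lemma inv_smul_add_smul_eq {t u a b : ℝ} (ht : 0 < t) (hu : 0 < u)
    (hT : 0 < a * t + b * u) (x y : E) :
    (a * t + b * u)⁻¹ • (a • x + b • y) =
      (a * t / (a * t + b * u)) • (t⁻¹ • x) + (b * u / (a * t + b * u)) • (u⁻¹ • y) := by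
  simp only [smul_add, smul_smul]
  congr 2 <;> field_simp

lemma mul_div_weights_of_pos {t u a b : ℝ} (ht : 0 < t) (hu : 0 < u) (ha : 0 ≤ a) (hb : 0 ≤ b)
    (hab : a + b = 1) :
    0 < a * t + b * u ∧ 0 ≤ a * t / (a * t + b * u) ∧ 0 ≤ b * u / (a * t + b * u) ∧
      a * t / (a * t + b * u) + b * u / (a * t + b * u) = 1 := by
  have hT : 0 < a * t + b * u := by simpa using convex_Ioi (0 : ℝ) ht hu ha hb hab
  exact ⟨hT, by positivity, by positivity, by field_simp⟩

theorem ConvexOn.perspective {s : Set E} {f : E → ℝ} (hf : ConvexOn ℝ s f) :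
    ConvexOn ℝ {p : ℝ × E | 0 < p.1 ∧ p.1⁻¹ • p.2 ∈ s} (fun p => p.1 * f (p.1⁻¹ • p.2)) := by
  refine ⟨?_, ?_⟩
  · rintro ⟨t, x⟩ ⟨ht, hx⟩ ⟨u, y⟩ ⟨hu, hy⟩ a b ha hb hab
    obtain ⟨hT, hw₁, hw₂, hw⟩ := mul_div_weights_of_pos ht hu ha hb hab
    refine ⟨by simpa using hT, ?_⟩
    simp only [Prod.smul_mk, Prod.mk_add_mk, smul_eq_mul]
    rw [inv_smul_add_smul_eq ht hu hT]
    exact hf.1 hx hy hw₁ hw₂ hw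
  · rintro ⟨t, x⟩ ⟨ht, hx⟩ ⟨u, y⟩ ⟨hu, hy⟩ a b ha hb hab
    obtain ⟨hT, hw₁, hw₂, hw⟩ := mul_div_weights_of_pos ht hu ha hb hab
    simp only [Prod.smul_mk, Prod.mk_add_mk, smul_eq_mul]
    rw [inv_smul_add_smul_eq ht hu hT]
    calc (a * t + b * u) * f ((a * t / (a * t + b * u)) • (t⁻¹ • x) +
          (b * u / (a * t + b * u)) • (u⁻¹ • y))
        ≤ (a * t + b * u) * ((a * t / (a * t + b * u)) * f (t⁻¹ • x) +
          (b * u / (a * t + b * u)) * f (u⁻¹ • y)) :=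
          mul_le_mul_of_nonneg_left (hf.2 hx hy hw₁ hw₂ hw) hT.le
      _ = a * (t * f (t⁻¹ • x)) + b * (u * f (u⁻¹ • y)) := by field_simp

lemma one_add_mul_pos_of_mem_Icc {d c : ℝ} (hd : d ∈ Icc (-1 : ℝ) 1) (hc : c ∈ Ioo (-1 : ℝ) 1) :
    0 < 1 + d * c := by
  obtain ⟨hd₁, hd₂⟩ := hd
  obtain ⟨hc₁, hc₂⟩ := hc
  nlinarith [mul_nonneg (by linarith : (0 : ℝ) ≤ 1 + d) (by linarith : (0 : ℝ) ≤ 1 + c),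
    mul_nonneg (by linarith : (0 : ℝ) ≤ 1 - d) (by linarith : (0 : ℝ) ≤ 1 - c)]

-- `1 + d c ± (d + c) = (1 ± d)(1 ± c)`
lemma add_div_one_add_mul_mem_Icc {d c : ℝ} (hd : d ∈ Icc (-1 : ℝ) 1) (hc : c ∈ Ioo (-1 : ℝ) 1) :
    (d + c) / (1 + d * c) ∈ Icc (-1 : ℝ) 1 := by
  have hpos := one_add_mul_pos_of_mem_Icc hd hc
  obtain ⟨hd₁, hd₂⟩ := hd
  obtain ⟨hc₁, hc₂⟩ := hc
  rw [mem_Icc, le_div_iff₀ hpos, div_le_one hpos]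
  constructor
  · nlinarith [mul_nonneg (by linarith : (0 : ℝ) ≤ 1 + d) (by linarith : (0 : ℝ) ≤ 1 + c)]
  · nlinarith [mul_nonneg (by linarith : (0 : ℝ) ≤ 1 - d) (by linarith : (0 : ℝ) ≤ 1 - c)]

theorem ConvexOn.half_one_add_mul_comp_div {f : ℝ → ℝ} (hf : ConvexOn ℝ (Icc (-1 : ℝ) 1) f)
    {c : ℝ} (hc : c ∈ Ioo (-1 : ℝ) 1) :
    ConvexOn ℝ (Icc (-1 : ℝ) 1) (fun d => (1 + d * c) / 2 * f ((d + c) / (1 + d * c))) := by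
  let g : ℝ →ᵃ[ℝ] ℝ × ℝ := AffineMap.lineMap (1 / 2, c / 2) ((1 + c) / 2, (1 + c) / 2)
  have hg : ∀ d, g d = ((1 + d * c) / 2, (d + c) / 2) := fun d => by
    simp only [g, AffineMap.lineMap_apply_module, Prod.smul_mk, Prod.mk_add_mk, smul_eq_mul]
    congr 1 <;> ring
  have hdiv : ∀ d ∈ Icc (-1 : ℝ) 1, ((1 + d * c) / 2)⁻¹ * ((d + c) / 2) = (d + c) / (1 + d * c) :=
    fun d hd => by field_simp [(one_add_mul_pos_of_mem_Icc hd hc).ne']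
  refine ((hf.perspective.comp_affineMap g).subset ?_ (convex_Icc _ _)).congr ?_
  · intro d hd
    simp only [mem_preimage, hg, mem_ofPred_eq, smul_eq_mul, hdiv d hd]
    exact ⟨by linarith [one_add_mul_pos_of_mem_Icc hd hc], add_div_one_add_mul_mem_Icc hd hc⟩
  · intro d hd
    simp only [Function.comp_apply, hg, smul_eq_mul, hdiv d hd]

theorem fplus_convex_in_d1_general
    (f : ℝ → ℝ)
    (hconv : ConvexOn ℝ (Icc (-1 : ℝ) 1) f)
    (d₂ : ℝ) (hd₂ : d₂ ∈ Ioo (-1 : ℝ) 1) :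
    ConvexOn ℝ (Icc (-1 : ℝ) 1)
      (fun d₁ => ((1 + d₁ * d₂) / 2) * f ((d₁ + d₂) / (1 + d₁ * d₂))
        + ((1 - d₁ * d₂) / 2) * f ((d₁ - d₂) / (1 - d₁ * d₂))) := by
  have hneg : -d₂ ∈ Ioo (-1 : ℝ) 1 := ⟨by linarith [hd₂.2], by linarith [hd₂.1]⟩
  refine ((hconv.half_one_add_mul_comp_div hd₂).add
    (hconv.half_one_add_mul_comp_div hneg)).congr fun d _ => ?_
  simp only [Pi.add_apply, mul_neg, ← sub_eq_add_neg]

theorem fplus_convex_in_d1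
    (f : ℝ → ℝ)
    (hconv : ConvexOn ℝ (Icc (-1 : ℝ) 1) f)
    (hsym : ∀ x ∈ Icc (-1 : ℝ) 1, f x = f (-x))
    (d₂ : ℝ) (hd₂ : d₂ ∈ Ioo (-1 : ℝ) 1) :
    ConvexOn ℝ (Icc (-1 : ℝ) 1)
      (fun d₁ => ((1 + d₁ * d₂) / 2) * f ((d₁ + d₂) / (1 + d₁ * d₂))
        + ((1 - d₁ * d₂) / 2) * f ((d₁ - d₂) / (1 - d₁ * d₂))) :=
  fplus_convex_in_d1_general f hconv d₂ hd₂
end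

section
/- Let X and Y be integrable real random variables that are symmetric in distribution (X has the same law as -X, and Y has the same law as -Y). If E[φ(|X|)] ≤ E[φ(|Y|)] for every increasing convex function φ : [0,∞) → ℝ (for which the expectations exist), then E[ψ(X)] ≤ E[ψ(Y)] for every convex function ψ : ℝ → ℝ for which the expectations exist. -/
/-!
For a symmetric `X`, replacing `ψ` by its even part `ψₑ t = (ψ t + ψ (-t)) / 2` does not change
`E ψ(X)`. The even part is convex and even, hence nondecreasing on `[0, ∞)`, and `ψₑ X = ψₑ |X|`, so
`E ψ(X) = E ψₑ(|X|) ≤ E ψₑ(|Y|) = E ψ(Y)`.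
-/

open Set MeasureTheory ProbabilityTheory

lemma ConvexOn.monotoneOn_Ici_of_even {φ : ℝ → ℝ} (hφ : ConvexOn ℝ univ φ)
    (heven : ∀ t, φ (-t) = φ t) : MonotoneOn φ (Ici 0) := by
  intro a ha b _ hab
  have hab' : a ∈ Icc (-b) b := ⟨by linarith [mem_Ici.mp ha], hab⟩
  simpa [heven] using hφ.le_max_of_mem_Icc (mem_univ _) (mem_univ _) hab'

noncomputable def evenPart (ψ : ℝ → ℝ) (t : ℝ) : ℝ := (ψ t + ψ (-t)) / 2

lemma evenPart_neg (ψ : ℝ → ℝ) (t : ℝ) : evenPart ψ (-t) = evenPart ψ t := by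
  simp only [evenPart, neg_neg, add_comm]

lemma evenPart_abs (ψ : ℝ → ℝ) (t : ℝ) : evenPart ψ |t| = evenPart ψ t := by
  rcases abs_choice t with h | h <;> simp only [h, evenPart_neg]

lemma convexOn_evenPart {ψ : ℝ → ℝ} (hψ : ConvexOn ℝ univ ψ) :
    ConvexOn ℝ univ (evenPart ψ) := by
  have hneg : ConvexOn ℝ univ (fun t => ψ (-t)) := by
    simpa [Function.comp_def] using hψ.comp_affineMap (-(AffineMap.id ℝ ℝ))
  have hsum : evenPart ψ = (2⁻¹ : ℝ) • (ψ + fun t => ψ (-t)) := by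
    funext t
    simp only [evenPart, Pi.smul_apply, Pi.add_apply, smul_eq_mul]
    ring
  rw [hsum]
  exact (hψ.add hneg).smul (by norm_num)

namespace ProbabilityTheory.IdentDistrib

variable {Ω : Type*} [MeasurableSpace Ω] {μ : Measure Ω} {X : Ω → ℝ} {ψ : ℝ → ℝ}

lemma integrable_evenPart_abs (hsym : IdentDistrib X (fun ω => -X ω) μ μ)
    (hψ : Measurable ψ) (hi : Integrable (fun ω => ψ (X ω)) μ) :
    Integrable (fun ω => evenPart ψ |X ω|) μ := by
  have hineg : Integrable (fun ω => ψ (-X ω)) μ := (hsym.comp hψ).integrable_snd hi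
  simp_rw [evenPart_abs]
  exact (hi.add hineg).div_const 2

lemma integral_evenPart_abs (hsym : IdentDistrib X (fun ω => -X ω) μ μ)
    (hψ : Measurable ψ) (hi : Integrable (fun ω => ψ (X ω)) μ) :
    ∫ ω, evenPart ψ |X ω| ∂μ = ∫ ω, ψ (X ω) ∂μ := by
  have hineg : Integrable (fun ω => ψ (-X ω)) μ := (hsym.comp hψ).integrable_snd hi
  have heq : ∫ ω, ψ (-X ω) ∂μ = ∫ ω, ψ (X ω) ∂μ := (hsym.comp hψ).integral_eq.symm
  calc ∫ ω, evenPart ψ |X ω| ∂μ = (∫ ω, ψ (X ω) + ψ (-X ω) ∂μ) / 2 := by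
        simp_rw [evenPart_abs, evenPart, integral_div]
    _ = ∫ ω, ψ (X ω) ∂μ := by rw [integral_add hi hineg, heq]; ring

end ProbabilityTheory.IdentDistrib

theorem sym_icx_implies_cx_general
    {Ω₁ Ω₂ : Type*} [MeasurableSpace Ω₁] [MeasurableSpace Ω₂]
    (μ : Measure Ω₁) (ν : Measure Ω₂)
    (X : Ω₁ → ℝ) (Y : Ω₂ → ℝ)
    (hX : Integrable X μ) (hY : Integrable Y ν)
    (hXsym : Measure.map X μ = Measure.map (fun ω => -X ω) μ)
    (hYsym : Measure.map Y ν = Measure.map (fun ω => -Y ω) ν)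
    (hord : ∀ φ : ℝ → ℝ, MonotoneOn φ (Ici (0 : ℝ)) → ConvexOn ℝ (Ici (0 : ℝ)) φ →
      Integrable (fun ω => φ |X ω|) μ → Integrable (fun ω => φ |Y ω|) ν →
      ∫ ω, φ |X ω| ∂μ ≤ ∫ ω, φ |Y ω| ∂ν) :
    ∀ ψ : ℝ → ℝ, ConvexOn ℝ univ ψ →
      Integrable (fun ω => ψ (X ω)) μ → Integrable (fun ω => ψ (Y ω)) ν →
      ∫ ω, ψ (X ω) ∂μ ≤ ∫ ω, ψ (Y ω) ∂ν := by
  intro ψ hψ hiX hiY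
  have hψm : Measurable ψ :=
    (continuousOn_univ.mp (hψ.continuousOn isOpen_univ)).measurable
  have hXid : IdentDistrib X (fun ω => -X ω) μ μ :=
    ⟨hX.aemeasurable, hX.aemeasurable.neg, hXsym⟩
  have hYid : IdentDistrib Y (fun ω => -Y ω) ν ν :=
    ⟨hY.aemeasurable, hY.aemeasurable.neg, hYsym⟩
  rw [← hXid.integral_evenPart_abs hψm hiX, ← hYid.integral_evenPart_abs hψm hiY]
  have hconv := convexOn_evenPart hψ
  exact hord _ (hconv.monotoneOn_Ici_of_even (evenPart_neg ψ))
    (hconv.subset (subset_univ _) (convex_Ici 0))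
    (hXid.integrable_evenPart_abs hψm hiX) (hYid.integrable_evenPart_abs hψm hiY)

theorem sym_icx_implies_cx
    {Ω₁ Ω₂ : Type*} [MeasurableSpace Ω₁] [MeasurableSpace Ω₂]
    (μ : Measure Ω₁) (ν : Measure Ω₂)
    [IsProbabilityMeasure μ] [IsProbabilityMeasure ν]
    (X : Ω₁ → ℝ) (Y : Ω₂ → ℝ)
    (hX : Integrable X μ) (hY : Integrable Y ν)
    (hXsym : Measure.map X μ = Measure.map (fun ω => -X ω) μ)
    (hYsym : Measure.map Y ν = Measure.map (fun ω => -Y ω) ν)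
    (hord : ∀ φ : ℝ → ℝ, MonotoneOn φ (Ici (0 : ℝ)) → ConvexOn ℝ (Ici (0 : ℝ)) φ →
      Integrable (fun ω => φ |X ω|) μ → Integrable (fun ω => φ |Y ω|) ν →
      ∫ ω, φ |X ω| ∂μ ≤ ∫ ω, φ |Y ω| ∂ν) :
    ∀ ψ : ℝ → ℝ, ConvexOn ℝ univ ψ →
      Integrable (fun ω => ψ (X ω)) μ → Integrable (fun ω => ψ (Y ω)) ν →
      ∫ ω, ψ (X ω) ∂μ ≤ ∫ ω, ψ (Y ω) ∂ν :=
  sym_icx_implies_cx_general μ ν X Y hX hY hXsym hYsym hord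
end

section
/- (Karlin–Novikoff cut criterion) Let X, Y be real random variables with finite means m_X ≤ m_Y and distribution functions F, G. Suppose there exists δ ∈ ℝ such that F(x) ≤ G(x) for all x ≤ δ and F(x) ≥ G(x) for all x > δ. Then E[φ(X)] ≤ E[φ(Y)] for every increasing convex function φ for which the expectations exist. -/
open Set MeasureTheory

theorem karlin_novikoff_cut_criterion
    {Ω₁ Ω₂ : Type*} [MeasurableSpace Ω₁] [MeasurableSpace Ω₂]
    (μ : Measure Ω₁) (ν : Measure Ω₂)
    [IsProbabilityMeasure μ] [IsProbabilityMeasure ν]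
    (X : Ω₁ → ℝ) (Y : Ω₂ → ℝ)
    (hX : Integrable X μ) (hY : Integrable Y ν)
    (hmean : ∫ ω, X ω ∂μ ≤ ∫ ω, Y ω ∂ν)
    (δ : ℝ)
    (hle : ∀ x ≤ δ, (μ {ω | X ω ≤ x}).toReal ≤ (ν {ω | Y ω ≤ x}).toReal)
    (hge : ∀ x > δ, (μ {ω | X ω ≤ x}).toReal ≥ (ν {ω | Y ω ≤ x}).toReal) :
    ∀ φ : ℝ → ℝ, Monotone φ → ConvexOn ℝ univ φ →
      Integrable (fun ω => φ (X ω)) μ → Integrable (fun ω => φ (Y ω)) ν →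
      ∫ ω, φ (X ω) ∂μ ≤ ∫ ω, φ (Y ω) ∂ν := by
  intro φ hmono hconv hφX hφY
  classical
  -- measurable representatives
  obtain ⟨X', hX'm, hXX'⟩ : ∃ X' : Ω₁ → ℝ, Measurable X' ∧ X =ᵐ[μ] X' :=
    ⟨hX.1.mk X, hX.1.stronglyMeasurable_mk.measurable, hX.1.ae_eq_mk⟩
  obtain ⟨Y', hY'm, hYY'⟩ : ∃ Y' : Ω₂ → ℝ, Measurable Y' ∧ Y =ᵐ[ν] Y' :=
    ⟨hY.1.mk Y, hY.1.stronglyMeasurable_mk.measurable, hY.1.ae_eq_mk⟩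
  have hXle : ∀ x : ℝ, μ {ω | X ω ≤ x} = μ {ω | X' ω ≤ x} := fun x =>
    measure_congr (hXX'.mono fun ω hω => congrArg (fun t => t ≤ x) hω)
  have hYle : ∀ x : ℝ, ν {ω | Y ω ≤ x} = ν {ω | Y' ω ≤ x} := fun x =>
    measure_congr (hYY'.mono fun ω hω => congrArg (fun t => t ≤ x) hω)
  have hX'int : Integrable X' μ := hX.congr hXX'
  have hY'int : Integrable Y' ν := hY.congr hYY'
  have hφX' : Integrable (fun ω => φ (X' ω)) μ := hφX.congr (hXX'.mono fun ω hω => congrArg φ hω)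
  have hφY' : Integrable (fun ω => φ (Y' ω)) ν := hφY.congr (hYY'.mono fun ω hω => congrArg φ hω)
  have hIX : ∫ ω, X ω ∂μ = ∫ ω, X' ω ∂μ := integral_congr_ae hXX'
  have hIY : ∫ ω, Y ω ∂ν = ∫ ω, Y' ω ∂ν := integral_congr_ae hYY'
  have hIφX : ∫ ω, φ (X ω) ∂μ = ∫ ω, φ (X' ω) ∂μ :=
    integral_congr_ae (hXX'.mono fun ω hω => congrArg φ hω)
  have hIφY : ∫ ω, φ (Y ω) ∂ν = ∫ ω, φ (Y' ω) ∂ν :=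
    integral_congr_ae (hYY'.mono fun ω hω => congrArg φ hω)
  -- ENNReal versions of the cut hypotheses
  have hleE : ∀ x ≤ δ, μ {ω | X' ω ≤ x} ≤ ν {ω | Y' ω ≤ x} := by
    intro x hx
    have h1 := hle x hx
    rw [hXle x, hYle x] at h1
    exact (ENNReal.toReal_le_toReal (measure_ne_top μ _) (measure_ne_top ν _)).1 h1
  have hgeE : ∀ x, δ < x → ν {ω | Y' ω ≤ x} ≤ μ {ω | X' ω ≤ x} := by
    intro x hx
    have h1 := hge x hx
    rw [hXle x, hYle x] at h1
    exact (ENNReal.toReal_le_toReal (measure_ne_top ν _) (measure_ne_top μ _)).1 h1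
  -- tail version on (δ, ∞)
  have tail : ∀ x, δ < x → μ {ω | x < X' ω} ≤ ν {ω | x < Y' ω} := by
    intro x hx
    have hcX : {ω | x < X' ω} = {ω | X' ω ≤ x}ᶜ := by
      ext ω; simp [not_le]
    have hcY : {ω | x < Y' ω} = {ω | Y' ω ≤ x}ᶜ := by
      ext ω; simp [not_le]
    have hmsX : MeasurableSet {ω | X' ω ≤ x} := hX'm measurableSet_Iic
    have hmsY : MeasurableSet {ω | Y' ω ≤ x} := hY'm measurableSet_Iic
    rw [hcX, hcY, prob_compl_eq_one_sub hmsX, prob_compl_eq_one_sub hmsY]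
    exact tsub_le_tsub_left (hgeE x hx) 1
  -- open lower interval comparison
  have cmpIio : ∀ a, a ≤ δ → μ {ω | X' ω < a} ≤ ν {ω | Y' ω < a} := by
    intro a ha
    have hset : {ω | X' ω < a} = ⋃ n : ℕ, {ω | X' ω ≤ a - 1 / (n + 1)} := by
      ext ω
      simp only [mem_setOf_eq, mem_iUnion]
      constructor
      · intro hlt
        obtain ⟨n, hn⟩ := exists_nat_one_div_lt (sub_pos.2 hlt)
        exact ⟨n, by push_cast at hn ⊢; linarith⟩
      · rintro ⟨n, hn⟩
        have hpos : (0 : ℝ) < 1 / (n + 1) := by positivity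
        linarith
    have hmon : Monotone fun n : ℕ => {ω | X' ω ≤ a - 1 / ((n : ℝ) + 1)} := by
      intro n m hnm ω hω
      simp only [mem_setOf_eq] at *
      have hcast : ((n : ℝ) + 1) ≤ (m : ℝ) + 1 := by
        have := (Nat.cast_le (α := ℝ)).2 hnm; linarith
      have : (1 : ℝ) / (m + 1) ≤ 1 / (n + 1) :=
        one_div_le_one_div_of_le (by positivity) hcast
      linarith
    rw [hset, hmon.measure_iUnion]
    refine iSup_le fun n => ?_
    have hpos : (0 : ℝ) < 1 / ((n : ℝ) + 1) := by positivity
    refine (hleE _ (by linarith)).trans (measure_mono ?_)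
    intro ω hω
    simp only [mem_setOf_eq] at *
    linarith
  -- open upper interval comparison
  have cmpIoi : ∀ b, δ ≤ b → μ {ω | b < X' ω} ≤ ν {ω | b < Y' ω} := by
    intro b hb
    have hset : {ω | b < X' ω} = ⋃ n : ℕ, {ω | b + 1 / ((n : ℝ) + 1) < X' ω} := by
      ext ω
      simp only [mem_setOf_eq, mem_iUnion]
      constructor
      · intro hlt
        obtain ⟨n, hn⟩ := exists_nat_one_div_lt (sub_pos.2 hlt)
        exact ⟨n, by push_cast at hn ⊢; linarith⟩
      · rintro ⟨n, hn⟩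
        have hpos : (0 : ℝ) < 1 / ((n : ℝ) + 1) := by positivity
        linarith
    have hmon : Monotone fun n : ℕ => {ω | b + 1 / ((n : ℝ) + 1) < X' ω} := by
      intro n m hnm ω hω
      simp only [mem_setOf_eq] at *
      have hcast : ((n : ℝ) + 1) ≤ (m : ℝ) + 1 := by
        have := (Nat.cast_le (α := ℝ)).2 hnm; linarith
      have : (1 : ℝ) / (m + 1) ≤ 1 / (n + 1) :=
        one_div_le_one_div_of_le (by positivity) hcast
      linarith
    rw [hset, hmon.measure_iUnion]
    refine iSup_le fun n => ?_
    have hpos : (0 : ℝ) < 1 / ((n : ℝ) + 1) := by positivity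
    refine (tail _ (by linarith)).trans (measure_mono ?_)
    intro ω hω
    simp only [mem_setOf_eq] at *
    linarith
  -- closed upper interval comparison
  have cmpIci : ∀ b, δ < b → μ {ω | b ≤ X' ω} ≤ ν {ω | b ≤ Y' ω} := by
    intro b hb
    set c : ℕ → ℝ := fun n => b - (b - δ) / ((n : ℝ) + 2) with hcdef
    have hbδ : (0 : ℝ) < b - δ := sub_pos.2 hb
    have hcδ : ∀ n : ℕ, δ < c n := by
      intro n
      have h2 : (b - δ) / ((n : ℝ) + 2) < b - δ := by
        apply div_lt_self hbδ
        have : (0 : ℝ) ≤ (n : ℝ) := Nat.cast_nonneg n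
        linarith
      show δ < b - (b - δ) / ((n : ℝ) + 2)
      linarith
    have hclt : ∀ n : ℕ, c n < b := by
      intro n
      have : (0 : ℝ) < (b - δ) / ((n : ℝ) + 2) := by positivity
      show b - (b - δ) / ((n : ℝ) + 2) < b
      linarith
    have hTanti : Antitone fun n : ℕ => {ω | c n < Y' ω} := by
      intro n m hnm ω hω
      simp only [mem_setOf_eq] at *
      have hcast : ((n : ℝ) + 2) ≤ (m : ℝ) + 2 := by
        have := (Nat.cast_le (α := ℝ)).2 hnm; linarith
      have : (b - δ) / ((m : ℝ) + 2) ≤ (b - δ) / ((n : ℝ) + 2) :=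
        div_le_div_of_nonneg_left hbδ.le (by positivity) hcast
      have hcc : c n ≤ c m := by
        show b - (b - δ) / ((n : ℝ) + 2) ≤ b - (b - δ) / ((m : ℝ) + 2)
        linarith
      exact lt_of_le_of_lt hcc hω
    have hTint : (⋂ n : ℕ, {ω | c n < Y' ω}) = {ω | b ≤ Y' ω} := by
      ext ω
      simp only [mem_iInter, mem_setOf_eq]
      constructor
      · intro hall
        by_contra hlt
        push_neg at hlt
        have h1 : 0 < b - Y' ω := by linarith
        obtain ⟨n, hn⟩ := exists_nat_gt ((b - δ) / (b - Y' ω))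
        have h3 : (b - δ) / (b - Y' ω) < (n : ℝ) + 2 := by linarith
        have h2 : (b - δ) / ((n : ℝ) + 2) < b - Y' ω := by
          rw [div_lt_iff₀ (by positivity)]
          calc b - δ = (b - δ) / (b - Y' ω) * (b - Y' ω) := by field_simp
            _ < ((n : ℝ) + 2) * (b - Y' ω) := mul_lt_mul_of_pos_right h3 h1
            _ = (b - Y' ω) * ((n : ℝ) + 2) := by ring
        have h4 : b - (b - δ) / ((n : ℝ) + 2) < Y' ω := hall n
        linarith
      · intro hge' n
        exact lt_of_lt_of_le (hclt n) hge'
    calc μ {ω | b ≤ X' ω}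
        ≤ ⨅ n : ℕ, ν {ω | c n < Y' ω} := by
          refine le_iInf fun n => ?_
          refine le_trans (measure_mono ?_) (tail (c n) (hcδ n))
          intro ω hω
          simp only [mem_setOf_eq] at *
          exact lt_of_lt_of_le (hclt n) hω
      _ = ν (⋂ n : ℕ, {ω | c n < Y' ω}) :=
          (hTanti.measure_iInter
            (fun n => (measurableSet_lt measurable_const hY'm).nullMeasurableSet)
            ⟨0, measure_ne_top ν _⟩).symm
      _ = ν {ω | b ≤ Y' ω} := by rw [hTint]
  -- subgradient of φ at δ
  set s₀ : ℝ := sSup ((fun y => (φ δ - φ y) / (δ - y)) '' Iio δ) with hs₀def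
  have hne : ((fun y => (φ δ - φ y) / (δ - y)) '' Iio δ).Nonempty :=
    ⟨_, ⟨δ - 1, by simp, rfl⟩⟩
  have hbdd : BddAbove ((fun y => (φ δ - φ y) / (δ - y)) '' Iio δ) := by
    refine ⟨(φ (δ + 1) - φ δ) / (δ + 1 - δ), ?_⟩
    rintro _ ⟨y, hy, rfl⟩
    exact hconv.slope_mono_adjacent (mem_univ y) (mem_univ (δ + 1)) hy (by linarith)
  have hs₀0 : 0 ≤ s₀ := by
    have h1 : (φ δ - φ (δ - 1)) / (δ - (δ - 1)) ≤ s₀ := le_csSup hbdd ⟨δ - 1, by simp, rfl⟩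
    have h2 : 0 ≤ (φ δ - φ (δ - 1)) / (δ - (δ - 1)) :=
      div_nonneg (sub_nonneg.2 (hmono (by linarith))) (by linarith)
    linarith
  have hsub : ∀ x, φ δ + s₀ * (x - δ) ≤ φ x := by
    intro x
    rcases lt_trichotomy x δ with hx | rfl | hx
    · have h1 : (φ δ - φ x) / (δ - x) ≤ s₀ := le_csSup hbdd ⟨x, hx, rfl⟩
      have h2 : (0 : ℝ) < δ - x := by linarith
      rw [div_le_iff₀ h2] at h1
      have h3 : s₀ * (x - δ) = -(s₀ * (δ - x)) := by ring
      linarith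
    · simp
    · have h1 : s₀ ≤ (φ x - φ δ) / (x - δ) := by
        refine csSup_le hne ?_
        rintro _ ⟨y, hy, rfl⟩
        exact hconv.slope_mono_adjacent (mem_univ y) (mem_univ x) hy hx
      have h2 : (0 : ℝ) < x - δ := by linarith
      rw [le_div_iff₀ h2] at h1
      linarith
  -- the nonnegative convex part
  set h : ℝ → ℝ := fun x => φ x - (φ δ + s₀ * (x - δ)) with hhdef
  have hh0 : ∀ x, 0 ≤ h x := by
    intro x
    have := hsub x
    show (0 : ℝ) ≤ φ x - (φ δ + s₀ * (x - δ))
    linarith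
  have hhδ : h δ = 0 := by
    show φ δ - (φ δ + s₀ * (δ - δ)) = 0
    ring
  have hhconv : ConvexOn ℝ univ h := by
    refine ⟨convex_univ, fun x _ y _ a b ha hb hab => ?_⟩
    have hkey := hconv.2 (mem_univ x) (mem_univ y) ha hb hab
    simp only [smul_eq_mul] at hkey ⊢
    show φ (a * x + b * y) - (φ δ + s₀ * (a * x + b * y - δ)) ≤
      a * (φ x - (φ δ + s₀ * (x - δ))) + b * (φ y - (φ δ + s₀ * (y - δ)))
    have hlin : s₀ * (a * x + b * y - δ) = a * (s₀ * (x - δ)) + b * (s₀ * (y - δ)) := by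
      linear_combination (s₀ * δ) * hab
    have hφδ : a * φ δ + b * φ δ = φ δ := by
      linear_combination (φ δ) * hab
    linarith
  have hmonoR : ∀ x y, δ ≤ x → x ≤ y → h x ≤ h y := by
    intro x y hδx hxy
    have hx : x ∈ segment ℝ δ y := by
      rw [segment_eq_Icc (hδx.trans hxy)]; exact ⟨hδx, hxy⟩
    have h1 := hhconv.le_on_segment (mem_univ δ) (mem_univ y) hx
    rw [hhδ] at h1
    exact h1.trans_eq (max_eq_right (hh0 y))
  have hmonoL : ∀ x y, x ≤ y → y ≤ δ → h y ≤ h x := by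
    intro x y hxy hyδ
    have hx : y ∈ segment ℝ x δ := by
      rw [segment_eq_Icc (hxy.trans hyδ)]; exact ⟨hxy, hyδ⟩
    have h1 := hhconv.le_on_segment (mem_univ x) (mem_univ δ) hx
    rw [hhδ] at h1
    exact h1.trans_eq (max_eq_left (hh0 x))
  -- classification of the two halves of superlevel sets
  have classA : ∀ u : ℝ, {t : ℝ | t ≤ δ ∧ u < h t} = ∅ ∨
      ∃ a, a ≤ δ ∧ ({t : ℝ | t ≤ δ ∧ u < h t} = Iic a ∨ {t : ℝ | t ≤ δ ∧ u < h t} = Iio a) := by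
    intro u
    rcases eq_empty_or_nonempty {t : ℝ | t ≤ δ ∧ u < h t} with hA | hA
    · exact Or.inl hA
    right
    have hAbdd : BddAbove {t : ℝ | t ≤ δ ∧ u < h t} := ⟨δ, fun t ht => ht.1⟩
    have haδ : sSup {t : ℝ | t ≤ δ ∧ u < h t} ≤ δ := csSup_le hA fun t ht => ht.1
    refine ⟨sSup {t : ℝ | t ≤ δ ∧ u < h t}, haδ, ?_⟩
    by_cases hmem : sSup {t : ℝ | t ≤ δ ∧ u < h t} ∈ {t : ℝ | t ≤ δ ∧ u < h t}
    · left
      ext t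
      simp only [mem_setOf_eq, mem_Iic]
      constructor
      · exact fun ht => le_csSup hAbdd ht
      · intro hta
        exact ⟨hta.trans haδ, lt_of_lt_of_le hmem.2 (hmonoL t _ hta hmem.1)⟩
    · right
      ext t
      simp only [mem_setOf_eq, mem_Iio]
      constructor
      · intro ht
        rcases lt_or_eq_of_le (le_csSup hAbdd ht) with hlt | heq
        · exact hlt
        · exact absurd (heq ▸ ht) hmem
      · intro hta
        obtain ⟨w, hw, htw⟩ := exists_lt_of_lt_csSup hA hta
        exact ⟨htw.le.trans hw.1, lt_of_lt_of_le hw.2 (hmonoL t w htw.le hw.1)⟩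
  have classB : ∀ u : ℝ, {t : ℝ | δ < t ∧ u < h t} = ∅ ∨
      ∃ b, δ ≤ b ∧ ((δ < b ∧ {t : ℝ | δ < t ∧ u < h t} = Ici b) ∨
        {t : ℝ | δ < t ∧ u < h t} = Ioi b) := by
    intro u
    rcases eq_empty_or_nonempty {t : ℝ | δ < t ∧ u < h t} with hB | hB
    · exact Or.inl hB
    right
    have hBbdd : BddBelow {t : ℝ | δ < t ∧ u < h t} := ⟨δ, fun t ht => ht.1.le⟩
    have hbδ : δ ≤ sInf {t : ℝ | δ < t ∧ u < h t} := le_csInf hB fun t ht => ht.1.le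
    refine ⟨sInf {t : ℝ | δ < t ∧ u < h t}, hbδ, ?_⟩
    by_cases hmem : sInf {t : ℝ | δ < t ∧ u < h t} ∈ {t : ℝ | δ < t ∧ u < h t}
    · left
      refine ⟨hmem.1, ?_⟩
      ext t
      simp only [mem_setOf_eq, mem_Ici]
      constructor
      · exact fun ht => csInf_le hBbdd ht
      · intro htb
        exact ⟨lt_of_lt_of_le hmem.1 htb, lt_of_lt_of_le hmem.2 (hmonoR _ t hbδ htb)⟩
    · right
      ext t
      simp only [mem_setOf_eq, mem_Ioi]
      constructor
      · intro ht
        rcases lt_or_eq_of_le (csInf_le hBbdd ht) with hlt | heq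
        · exact hlt
        · exact absurd (heq.symm ▸ ht) hmem
      · intro hbt
        obtain ⟨w, hw, hwt⟩ := exists_lt_of_csInf_lt hB hbt
        exact ⟨hw.1.trans_le hwt.le, lt_of_lt_of_le hw.2 (hmonoR w t hw.1.le hwt.le)⟩
  -- measure comparison of superlevel sets
  have keyAB : ∀ u : ℝ, 0 < u → μ {ω | u < h (X' ω)} ≤ ν {ω | u < h (Y' ω)} := by
    intro u _
    have hsplit : ∀ t : ℝ, u < h t ↔ t ∈ {t : ℝ | t ≤ δ ∧ u < h t} ∪ {t : ℝ | δ < t ∧ u < h t} := by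
      intro t
      simp only [mem_union, mem_setOf_eq]
      constructor
      · intro h'
        rcases le_or_gt t δ with h2 | h2
        exacts [Or.inl ⟨h2, h'⟩, Or.inr ⟨h2, h'⟩]
      · rintro (⟨_, h'⟩ | ⟨_, h'⟩) <;> exact h'
    have hX'A : {ω | u < h (X' ω)} =
        X' ⁻¹' {t : ℝ | t ≤ δ ∧ u < h t} ∪ X' ⁻¹' {t : ℝ | δ < t ∧ u < h t} := by
      ext ω
      rw [← preimage_union]
      exact hsplit (X' ω)
    have hY'A : {ω | u < h (Y' ω)} =
        Y' ⁻¹' {t : ℝ | t ≤ δ ∧ u < h t} ∪ Y' ⁻¹' {t : ℝ | δ < t ∧ u < h t} := by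
      ext ω
      rw [← preimage_union]
      exact hsplit (Y' ω)
    have hABdisj : Disjoint {t : ℝ | t ≤ δ ∧ u < h t} {t : ℝ | δ < t ∧ u < h t} :=
      disjoint_left.2 fun t ht ht' => absurd ht'.1 (not_lt.2 ht.1)
    have hBmeas : MeasurableSet {t : ℝ | δ < t ∧ u < h t} := by
      rcases classB u with hB | ⟨b, hbδ, (⟨hbgt, hB⟩ | hB)⟩ <;> rw [hB]
      exacts [MeasurableSet.empty, measurableSet_Ici, measurableSet_Ioi]
    have hmA : μ (X' ⁻¹' {t : ℝ | t ≤ δ ∧ u < h t}) ≤ ν (Y' ⁻¹' {t : ℝ | t ≤ δ ∧ u < h t}) := by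
      rcases classA u with hA | ⟨a, haδ, (hA | hA)⟩ <;> rw [hA]
      · simp
      · exact hleE a haδ
      · exact cmpIio a haδ
    have hmB : μ (X' ⁻¹' {t : ℝ | δ < t ∧ u < h t}) ≤ ν (Y' ⁻¹' {t : ℝ | δ < t ∧ u < h t}) := by
      rcases classB u with hB | ⟨b, hbδ, (⟨hbgt, hB⟩ | hB)⟩ <;> rw [hB]
      · simp
      · exact cmpIci b hbgt
      · exact cmpIoi b hbδ
    rw [hX'A, hY'A, measure_union (hABdisj.preimage X') (hX'm hBmeas),
      measure_union (hABdisj.preimage Y') (hY'm hBmeas)]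
    exact add_le_add hmA hmB
  -- integrability of the pieces
  have hφm : Measurable φ := hmono.measurable
  have hhm : Measurable h := by
    have hℓ : Measurable fun x : ℝ => φ δ + s₀ * (x - δ) :=
      measurable_const.add ((measurable_id.sub measurable_const).const_mul s₀)
    exact hφm.sub hℓ
  have hconstX : Integrable (fun _ : Ω₁ => φ δ) μ := integrable_const _
  have hconstY : Integrable (fun _ : Ω₂ => φ δ) ν := integrable_const _
  have hmulX : Integrable (fun ω => s₀ * (X' ω - δ)) μ :=
    (hX'int.sub (integrable_const δ)).const_mul s₀
  have hmulY : Integrable (fun ω => s₀ * (Y' ω - δ)) ν :=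
    (hY'int.sub (integrable_const δ)).const_mul s₀
  have hℓX : Integrable (fun ω => φ δ + s₀ * (X' ω - δ)) μ := hconstX.add hmulX
  have hℓY : Integrable (fun ω => φ δ + s₀ * (Y' ω - δ)) ν := hconstY.add hmulY
  have hhX : Integrable (fun ω => h (X' ω)) μ := hφX'.sub hℓX
  have hhY : Integrable (fun ω => h (Y' ω)) ν := hφY'.sub hℓY
  -- layer cake comparison for h
  have e1 : ∫⁻ ω, ENNReal.ofReal (h (X' ω)) ∂μ = ∫⁻ u in Ioi (0 : ℝ), μ {ω | u < h (X' ω)} :=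
    lintegral_eq_lintegral_meas_lt μ (ae_of_all _ fun ω => hh0 _) (hhm.comp hX'm).aemeasurable
  have e2 : ∫⁻ ω, ENNReal.ofReal (h (Y' ω)) ∂ν = ∫⁻ u in Ioi (0 : ℝ), ν {ω | u < h (Y' ω)} :=
    lintegral_eq_lintegral_meas_lt ν (ae_of_all _ fun ω => hh0 _) (hhm.comp hY'm).aemeasurable
  have e3 : ∫⁻ u in Ioi (0 : ℝ), μ {ω | u < h (X' ω)} ≤
      ∫⁻ u in Ioi (0 : ℝ), ν {ω | u < h (Y' ω)} := by
    refine lintegral_mono_ae ?_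
    rw [ae_restrict_iff' measurableSet_Ioi]
    exact ae_of_all _ fun u hu => keyAB u hu
  have e4 : ∫⁻ ω, ENNReal.ofReal (h (Y' ω)) ∂ν ≠ ⊤ := hhY.lintegral_lt_top.ne
  have hint : ∫ ω, h (X' ω) ∂μ ≤ ∫ ω, h (Y' ω) ∂ν := by
    rw [integral_eq_lintegral_of_nonneg_ae (ae_of_all _ fun ω => hh0 _)
        (hhm.comp hX'm).aestronglyMeasurable,
      integral_eq_lintegral_of_nonneg_ae (ae_of_all _ fun ω => hh0 _)
        (hhm.comp hY'm).aestronglyMeasurable]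
    exact ENNReal.toReal_mono e4 (by rw [e1, e2]; exact e3)
  -- affine part integrals
  have hℓXint : ∫ ω, (φ δ + s₀ * (X' ω - δ)) ∂μ = φ δ + s₀ * ((∫ ω, X' ω ∂μ) - δ) := by
    rw [integral_add hconstX hmulX, integral_const, integral_const_mul,
      integral_sub hX'int (integrable_const δ), integral_const]
    simp [measure_univ]
  have hℓYint : ∫ ω, (φ δ + s₀ * (Y' ω - δ)) ∂ν = φ δ + s₀ * ((∫ ω, Y' ω ∂ν) - δ) := by
    rw [integral_add hconstY hmulY, integral_const, integral_const_mul,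
      integral_sub hY'int (integrable_const δ), integral_const]
    simp [measure_univ]
  -- decomposition of the integrals
  have hdecX : ∫ ω, φ (X' ω) ∂μ
      = (φ δ + s₀ * ((∫ ω, X' ω ∂μ) - δ)) + ∫ ω, h (X' ω) ∂μ := by
    rw [← hℓXint, ← integral_add hℓX hhX]
    refine integral_congr_ae (ae_of_all _ fun ω => ?_)
    show φ (X' ω) = (φ δ + s₀ * (X' ω - δ)) + (φ (X' ω) - (φ δ + s₀ * (X' ω - δ)))
    ring
  have hdecY : ∫ ω, φ (Y' ω) ∂ν
      = (φ δ + s₀ * ((∫ ω, Y' ω ∂ν) - δ)) + ∫ ω, h (Y' ω) ∂ν := by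
    rw [← hℓYint, ← integral_add hℓY hhY]
    refine integral_congr_ae (ae_of_all _ fun ω => ?_)
    show φ (Y' ω) = (φ δ + s₀ * (Y' ω - δ)) + (φ (Y' ω) - (φ δ + s₀ * (Y' ω - δ)))
    ring
  -- conclusion
  rw [hIφX, hIφY, hdecX, hdecY]
  have hm : ∫ ω, X' ω ∂μ ≤ ∫ ω, Y' ω ∂ν := by rw [← hIX, ← hIY]; exact hmean
  have hs : s₀ * ((∫ ω, X' ω ∂μ) - δ) ≤ s₀ * ((∫ ω, Y' ω ∂ν) - δ) :=
    mul_le_mul_of_nonneg_left (by linarith) hs₀0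
  linarith [hint]
end

section
/- Let W be a B-DMC with finite output alphabet and V a stochastically degraded version of W via a channel P. Then for every convex function f : [-1,1] → ℝ, Σ_y q_V(y) f(Δ_V(y)) ≤ Σ_z q_W(z) f(Δ_W(z)), where Δ_W(y) = (W(y|0)-W(y|1))/(W(y|0)+W(y|1)) and q_W(y) = (W(y|0)+W(y|1))/2. -/
open Set Finset

theorem degradation_implies_convex_order
    {𝒴 : Type*} [Fintype 𝒴]
    (W V : Bool → 𝒴 → ℝ) (P : 𝒴 → 𝒴 → ℝ)
    (hWnonneg : ∀ x y, 0 ≤ W x y)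
    (hPnonneg : ∀ z y, 0 ≤ P z y)
    (hPsum : ∀ z, ∑ y, P z y = 1)
    (hdeg : ∀ x y, V x y = ∑ z, W x z * P z y)
    (hqW : ∀ z, 0 < W false z + W true z)
    (hqV : ∀ y, 0 < V false y + V true y)
    (f : ℝ → ℝ) (hconv : ConvexOn ℝ (Icc (-1 : ℝ) 1) f) :
    ∑ y, ((V false y + V true y) / 2) *
        f ((V false y - V true y) / (V false y + V true y))
      ≤ ∑ z, ((W false z + W true z) / 2) *
        f ((W false z - W true z) / (W false z + W true z)) := by
  have hmem : ∀ z, (W false z - W true z) / (W false z + W true z) ∈ Icc (-1:ℝ) 1 := by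
    intro z
    constructor
    · rw [le_div_iff₀ (hqW z)]
      nlinarith [hWnonneg false z, hWnonneg true z]
    · rw [div_le_one (hqW z)]
      nlinarith [hWnonneg true z]
  have key : ∀ y, ((V false y + V true y) / 2) *
      f ((V false y - V true y) / (V false y + V true y))
      ≤ ∑ z, ((W false z + W true z) * P z y / 2) *
        f ((W false z - W true z) / (W false z + W true z)) := by
    intro y
    have hSVy := hqV y
    have h1 : ∑ z, (W false z + W true z) * P z y / (V false y + V true y) = 1 := by
      rw [← Finset.sum_div, div_eq_one_iff_eq hSVy.ne']
      rw [hdeg false y, hdeg true y, ← Finset.sum_add_distrib]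
      exact Finset.sum_congr rfl fun z _ => by ring
    have h2 : ∑ z, ((W false z + W true z) * P z y / (V false y + V true y)) •
        ((W false z - W true z) / (W false z + W true z))
        = (V false y - V true y) / (V false y + V true y) := by
      have hterm : ∀ z, ((W false z + W true z) * P z y / (V false y + V true y)) •
          ((W false z - W true z) / (W false z + W true z))
          = (W false z - W true z) * P z y / (V false y + V true y) := by
        intro z
        have hz := (hqW z).ne'
        rw [smul_eq_mul]
        field_simp
      calc ∑ z, ((W false z + W true z) * P z y / (V false y + V true y)) •
          ((W false z - W true z) / (W false z + W true z))
          = ∑ z, (W false z - W true z) * P z y / (V false y + V true y) :=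
            Finset.sum_congr rfl fun z _ => hterm z
        _ = (V false y - V true y) / (V false y + V true y) := by
            rw [← Finset.sum_div, hdeg false y, hdeg true y, ← Finset.sum_sub_distrib]
            congr 1
            exact Finset.sum_congr rfl fun z _ => by ring
    have hjen := hconv.map_sum_le (t := Finset.univ)
      (fun z _ => div_nonneg (mul_nonneg (hqW z).le (hPnonneg z y)) hSVy.le) h1 (fun z _ => hmem z)
    rw [h2] at hjen
    calc ((V false y + V true y) / 2) *
        f ((V false y - V true y) / (V false y + V true y))
        ≤ ((V false y + V true y) / 2) *
          ∑ z, ((W false z + W true z) * P z y / (V false y + V true y)) *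
            f ((W false z - W true z) / (W false z + W true z)) :=
          mul_le_mul_of_nonneg_left hjen (by positivity)
      _ = ∑ z, ((W false z + W true z) * P z y / 2) *
            f ((W false z - W true z) / (W false z + W true z)) := by
          rw [Finset.mul_sum]
          apply Finset.sum_congr rfl
          intro z _
          field_simp
  calc ∑ y, ((V false y + V true y) / 2) *
        f ((V false y - V true y) / (V false y + V true y))
      ≤ ∑ y, ∑ z, ((W false z + W true z) * P z y / 2) *
        f ((W false z - W true z) / (W false z + W true z)) :=
        Finset.sum_le_sum fun y _ => key y
    _ = ∑ z, ((W false z + W true z) / 2) *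
        f ((W false z - W true z) / (W false z + W true z)) := by
        rw [Finset.sum_comm]
        apply Finset.sum_congr rfl
        intro z _
        rw [← Finset.sum_mul, ← Finset.sum_div, ← Finset.mul_sum, hPsum z]
        ring
end

section
/- For a B-DMC W, under the minus polar transform the Δ-parameter multiplies: Δ_{W⁻}(y₁,y₂) = Δ_W(y₁)·Δ_W(y₂), where W⁻(y₁y₂|u₁) = Σ_{u₂} (1/2) W(y₁|u₁⊕u₂) W(y₂|u₂). -/
open Finset

theorem delta_minus_transform
    {𝒴 : Type*} [Fintype 𝒴]
    (W : Bool → 𝒴 → ℝ)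
    (Wm : Bool → 𝒴 × 𝒴 → ℝ)
    (hWm : ∀ u₁ y₁ y₂, Wm u₁ (y₁, y₂) =
      ∑ u₂ : Bool, (1 / 2 : ℝ) * W (xor u₁ u₂) y₁ * W u₂ y₂)
    (hq : ∀ y, 0 < W false y + W true y)
    (hqm : ∀ y₁ y₂, 0 < Wm false (y₁, y₂) + Wm true (y₁, y₂)) :
    ∀ y₁ y₂ : 𝒴,
      (Wm false (y₁, y₂) - Wm true (y₁, y₂)) / (Wm false (y₁, y₂) + Wm true (y₁, y₂))
        = ((W false y₁ - W true y₁) / (W false y₁ + W true y₁)) *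
          ((W false y₂ - W true y₂) / (W false y₂ + W true y₂)) := by
  intro y₁ y₂
  have h1 := (hq y₁).ne'
  have h2 := (hq y₂).ne'
  rw [hWm false y₁ y₂, hWm true y₁ y₂]
  simp only [Fintype.sum_bool, Bool.xor_false, Bool.xor_true, Bool.xor_self, Bool.not_true,
    Bool.not_false]
  rw [div_mul_div_comm, div_eq_div_iff (by nlinarith [hq y₁, hq y₂, mul_pos (hq y₁) (hq y₂)]) (by positivity)]
  ring
end

section
/- For a B-DMC W with finite output alphabet and any function f : [-1,1] → ℝ, Σ_{y₁,y₂} q_{W⁻}(y₁y₂) f(Δ_{W⁻}(y₁y₂)) = Σ_{y₁} q_W(y₁) Σ_{y₂} q_W(y₂) f(Δ_W(y₁)·Δ_W(y₂)). -/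
open Finset

theorem minus_transform_expectation
    {𝒴 : Type*} [Fintype 𝒴]
    (W : Bool → 𝒴 → ℝ)
    (Wm : Bool → 𝒴 × 𝒴 → ℝ)
    (hWm : ∀ u₁ y₁ y₂, Wm u₁ (y₁, y₂) =
      ∑ u₂ : Bool, (1 / 2 : ℝ) * W (xor u₁ u₂) y₁ * W u₂ y₂)
    (hWnonneg : ∀ x y, 0 ≤ W x y)
    (f : ℝ → ℝ) :
    ∑ y₁ : 𝒴, ∑ y₂ : 𝒴,
        ((Wm false (y₁, y₂) + Wm true (y₁, y₂)) / 2) *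
          f ((Wm false (y₁, y₂) - Wm true (y₁, y₂)) /
              (Wm false (y₁, y₂) + Wm true (y₁, y₂)))
      = ∑ y₁ : 𝒴, ((W false y₁ + W true y₁) / 2) *
          ∑ y₂ : 𝒴, ((W false y₂ + W true y₂) / 2) *
            f (((W false y₁ - W true y₁) / (W false y₁ + W true y₁)) *
               ((W false y₂ - W true y₂) / (W false y₂ + W true y₂))) := by
  refine Finset.sum_congr rfl fun y₁ _ => ?_
  rw [Finset.mul_sum]
  refine Finset.sum_congr rfl fun y₂ _ => ?_
  have hf : Wm false (y₁, y₂) =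
      1/2 * W false y₁ * W false y₂ + 1/2 * W true y₁ * W true y₂ := by
    rw [hWm]; simp [Fintype.sum_bool]; ring
  have ht : Wm true (y₁, y₂) =
      1/2 * W true y₁ * W false y₂ + 1/2 * W false y₁ * W true y₂ := by
    rw [hWm]; simp [Fintype.sum_bool]; ring
  set a := W false y₁; set b := W true y₁
  set c := W false y₂; set d := W true y₂
  have hsum : Wm false (y₁, y₂) + Wm true (y₁, y₂) = (a + b) * (c + d) / 2 := by
    rw [hf, ht]; ring
  have hdiff : Wm false (y₁, y₂) - Wm true (y₁, y₂) = (a - b) * (c - d) / 2 := by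
    rw [hf, ht]; ring
  have harg : (Wm false (y₁, y₂) - Wm true (y₁, y₂)) /
      (Wm false (y₁, y₂) + Wm true (y₁, y₂)) =
      ((a - b) / (a + b)) * ((c - d) / (c + d)) := by
    rw [hsum, hdiff, div_mul_div_comm]
    rcases eq_or_ne ((a + b) * (c + d)) 0 with h | h
    · simp [h]
    · field_simp
  rw [harg, hsum]
  ring
end

section
/- For a B-DMC W with finite output alphabet and any function f : [-1,1] → ℝ, Σ_{y₁,y₂,u₁} q_{W⁺}(y₁y₂u₁) f(Δ_{W⁺}(y₁y₂u₁)) = Σ_{y₁} q_W(y₁) Σ_{y₂} q_W(y₂) f⁺(Δ_W(y₁), Δ_W(y₂)), where f⁺(d₁,d₂) = ((1+d₁d₂)/2) f((d₁+d₂)/(1+d₁d₂)) + ((1-d₁d₂)/2) f((d₁-d₂)/(1-d₁d₂)). -/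
open Finset

private lemma half_div' (x y : ℝ) : (1/2*x) / (1/2*y) = x / y := by
  rcases eq_or_ne y 0 with h | h
  · simp [h]
  · field_simp

private lemma pair' (f : ℝ → ℝ) (p q r s : ℝ) :
    ((1/2*p*q + 1/2*r*s)/2) * f ((1/2*p*q - 1/2*r*s)/(1/2*p*q + 1/2*r*s))
      = (p*q+r*s)/4 * f ((p*q-r*s)/(p*q+r*s)) := by
  have h1 : (1/2*p*q - 1/2*r*s : ℝ) = 1/2*(p*q - r*s) := by ring
  have h2 : (1/2*p*q + 1/2*r*s : ℝ) = 1/2*(p*q + r*s) := by ring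
  rw [h1, h2, half_div']
  ring

noncomputable def Tplus (f : ℝ → ℝ) (a b c d : ℝ) : ℝ :=
  ((a+b)/2) * ((c+d)/2) *
    (((1 + (a-b)/(a+b) * ((c-d)/(c+d)))/2) *
      f (((a-b)/(a+b) + (c-d)/(c+d)) / (1 + (a-b)/(a+b) * ((c-d)/(c+d)))))

noncomputable def Tminus (f : ℝ → ℝ) (a b c d : ℝ) : ℝ :=
  ((a+b)/2) * ((c+d)/2) *
    (((1 - (a-b)/(a+b) * ((c-d)/(c+d)))/2) *
      f (((a-b)/(a+b) - (c-d)/(c+d)) / (1 - (a-b)/(a+b) * ((c-d)/(c+d)))))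

private lemma term1 (f : ℝ → ℝ) (a b c d : ℝ)
    (ha : 0 ≤ a) (hb : 0 ≤ b) (hc : 0 ≤ c) (hd : 0 ≤ d) :
    (a*c+b*d)/4 * f ((a*c-b*d)/(a*c+b*d)) = Tplus f a b c d := by
  simp only [Tplus]
  rcases eq_or_lt_of_le (add_nonneg ha hb) with hab | hab
  · obtain ⟨ha0, hb0⟩ : a = 0 ∧ b = 0 := by constructor <;> linarith
    simp [ha0, hb0]
  rcases eq_or_lt_of_le (add_nonneg hc hd) with hcd | hcd
  · obtain ⟨hc0, hd0⟩ : c = 0 ∧ d = 0 := by constructor <;> linarith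
    simp [hc0, hd0]
  have hab' : a + b ≠ 0 := ne_of_gt hab
  have hcd' : c + d ≠ 0 := ne_of_gt hcd
  have h1 : 1 + (a-b)/(a+b) * ((c-d)/(c+d)) = 2*(a*c+b*d)/((a+b)*(c+d)) := by
    field_simp; ring
  have h2 : (a-b)/(a+b) + (c-d)/(c+d) = 2*(a*c-b*d)/((a+b)*(c+d)) := by
    field_simp; ring
  rw [h1, h2]
  rcases eq_or_ne (a*c+b*d) 0 with hS | hS
  · simp [hS]
  have harg : 2*(a*c-b*d)/((a+b)*(c+d)) / (2*(a*c+b*d)/((a+b)*(c+d))) = (a*c-b*d)/(a*c+b*d) := by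
    field_simp
  rw [harg]
  field_simp
  ring

private lemma term2 (f : ℝ → ℝ) (a b c d : ℝ)
    (ha : 0 ≤ a) (hb : 0 ≤ b) (hc : 0 ≤ c) (hd : 0 ≤ d) :
    (b*c+a*d)/4 * f ((b*c-a*d)/(b*c+a*d)) = Tminus f c d a b := by
  simp only [Tminus]
  rcases eq_or_lt_of_le (add_nonneg ha hb) with hab | hab
  · obtain ⟨ha0, hb0⟩ : a = 0 ∧ b = 0 := by constructor <;> linarith
    simp [ha0, hb0]
  rcases eq_or_lt_of_le (add_nonneg hc hd) with hcd | hcd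
  · obtain ⟨hc0, hd0⟩ : c = 0 ∧ d = 0 := by constructor <;> linarith
    simp [hc0, hd0]
  have hab' : a + b ≠ 0 := ne_of_gt hab
  have hcd' : c + d ≠ 0 := ne_of_gt hcd
  have h1 : 1 - (c-d)/(c+d) * ((a-b)/(a+b)) = 2*(b*c+a*d)/((c+d)*(a+b)) := by
    field_simp; ring
  have h2 : (c-d)/(c+d) - (a-b)/(a+b) = 2*(b*c-a*d)/((c+d)*(a+b)) := by
    field_simp; ring
  rw [h1, h2]
  rcases eq_or_ne (b*c+a*d) 0 with hS | hS
  · simp [hS]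
  have harg : 2*(b*c-a*d)/((c+d)*(a+b)) / (2*(b*c+a*d)/((c+d)*(a+b))) = (b*c-a*d)/(b*c+a*d) := by
    field_simp
  rw [harg]
  field_simp
  ring

theorem plus_transform_expectation
    {𝒴 : Type*} [Fintype 𝒴]
    (W : Bool → 𝒴 → ℝ)
    (Wp : Bool → 𝒴 × 𝒴 × Bool → ℝ)
    (hWp : ∀ u₂ y₁ y₂ u₁, Wp u₂ (y₁, y₂, u₁) =
      (1 / 2 : ℝ) * W (xor u₁ u₂) y₁ * W u₂ y₂)
    (hWnonneg : ∀ x y, 0 ≤ W x y)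
    (f : ℝ → ℝ)
    (fplus : ℝ → ℝ → ℝ)
    (hfplus : ∀ d₁ d₂ : ℝ, fplus d₁ d₂ =
      ((1 + d₁ * d₂) / 2) * f ((d₁ + d₂) / (1 + d₁ * d₂))
        + ((1 - d₁ * d₂) / 2) * f ((d₁ - d₂) / (1 - d₁ * d₂))) :
    ∑ y₁ : 𝒴, ∑ y₂ : 𝒴, ∑ u₁ : Bool,
        ((Wp false (y₁, y₂, u₁) + Wp true (y₁, y₂, u₁)) / 2) *
          f ((Wp false (y₁, y₂, u₁) - Wp true (y₁, y₂, u₁)) /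
              (Wp false (y₁, y₂, u₁) + Wp true (y₁, y₂, u₁)))
      = ∑ y₁ : 𝒴, ((W false y₁ + W true y₁) / 2) *
          ∑ y₂ : 𝒴, ((W false y₂ + W true y₂) / 2) *
            fplus ((W false y₁ - W true y₁) / (W false y₁ + W true y₁))
                  ((W false y₂ - W true y₂) / (W false y₂ + W true y₂)) := by
  have key : ∀ y₁ y₂ : 𝒴,
      (∑ u₁ : Bool, ((Wp false (y₁, y₂, u₁) + Wp true (y₁, y₂, u₁)) / 2) *
          f ((Wp false (y₁, y₂, u₁) - Wp true (y₁, y₂, u₁)) /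
              (Wp false (y₁, y₂, u₁) + Wp true (y₁, y₂, u₁))))
      = Tplus f (W false y₁) (W true y₁) (W false y₂) (W true y₂)
        + Tminus f (W false y₂) (W true y₂) (W false y₁) (W true y₁) := by
    intro y₁ y₂
    rw [Fintype.sum_bool]
    simp only [hWp, Bool.xor_false, Bool.xor_true, Bool.true_xor, Bool.false_xor,
      Bool.not_true, Bool.not_false]
    rw [pair' f (W true y₁) (W false y₂) (W false y₁) (W true y₂),
        pair' f (W false y₁) (W false y₂) (W true y₁) (W true y₂),
        term1 f (W false y₁) (W true y₁) (W false y₂) (W true y₂)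
          (hWnonneg _ _) (hWnonneg _ _) (hWnonneg _ _) (hWnonneg _ _),
        term2 f (W false y₁) (W true y₁) (W false y₂) (W true y₂)
          (hWnonneg _ _) (hWnonneg _ _) (hWnonneg _ _) (hWnonneg _ _)]
    ring
  calc ∑ y₁ : 𝒴, ∑ y₂ : 𝒴, ∑ u₁ : Bool,
        ((Wp false (y₁, y₂, u₁) + Wp true (y₁, y₂, u₁)) / 2) *
          f ((Wp false (y₁, y₂, u₁) - Wp true (y₁, y₂, u₁)) /
              (Wp false (y₁, y₂, u₁) + Wp true (y₁, y₂, u₁)))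
      = ∑ y₁ : 𝒴, ∑ y₂ : 𝒴,
          (Tplus f (W false y₁) (W true y₁) (W false y₂) (W true y₂)
            + Tminus f (W false y₂) (W true y₂) (W false y₁) (W true y₁)) :=
        Finset.sum_congr rfl fun y₁ _ => Finset.sum_congr rfl fun y₂ _ => key y₁ y₂
    _ = (∑ y₁ : 𝒴, ∑ y₂ : 𝒴, Tplus f (W false y₁) (W true y₁) (W false y₂) (W true y₂))
        + ∑ y₁ : 𝒴, ∑ y₂ : 𝒴, Tminus f (W false y₂) (W true y₂) (W false y₁) (W true y₁) := by
        simp [Finset.sum_add_distrib]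
    _ = (∑ y₁ : 𝒴, ∑ y₂ : 𝒴, Tplus f (W false y₁) (W true y₁) (W false y₂) (W true y₂))
        + ∑ y₁ : 𝒴, ∑ y₂ : 𝒴, Tminus f (W false y₁) (W true y₁) (W false y₂) (W true y₂) := by
        rw [Finset.sum_comm (f := fun y₁ y₂ =>
          Tminus f (W false y₂) (W true y₂) (W false y₁) (W true y₁))]
    _ = ∑ y₁ : 𝒴, ∑ y₂ : 𝒴,
          (Tplus f (W false y₁) (W true y₁) (W false y₂) (W true y₂)
            + Tminus f (W false y₁) (W true y₁) (W false y₂) (W true y₂)) := by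
        simp [Finset.sum_add_distrib]
    _ = ∑ y₁ : 𝒴, ((W false y₁ + W true y₁) / 2) *
          ∑ y₂ : 𝒴, ((W false y₂ + W true y₂) / 2) *
            fplus ((W false y₁ - W true y₁) / (W false y₁ + W true y₁))
                  ((W false y₂ - W true y₂) / (W false y₂ + W true y₂)) := by
        refine Finset.sum_congr rfl fun y₁ _ => ?_
        rw [Finset.mul_sum]
        refine Finset.sum_congr rfl fun y₂ _ => ?_
        rw [hfplus]
        simp only [Tplus, Tminus]
        ring
end

section
/- Let W be a Z-channel with crossover probability p ∈ [0,1] and V a BSC with crossover probability ε ∈ [0,1/2]. If V is stochastically degraded with respect to W (via a binary channel P), then p/(1+p) ≤ ε ≤ 1/(1+p). -/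
open Finset

theorem zchannel_bsc_degradation_range
    (p ε : ℝ) (hp : p ∈ Set.Icc (0 : ℝ) 1) (hε : ε ∈ Set.Icc (0 : ℝ) (1 / 2))
    (W V : Bool → Bool → ℝ)
    (hW : W false false = 1 ∧ W false true = 0 ∧ W true false = p ∧ W true true = 1 - p)
    (hV : V false false = 1 - ε ∧ V false true = ε ∧ V true false = ε ∧ V true true = 1 - ε)
    (hdeg : ∃ P : Bool → Bool → ℝ, (∀ z y, 0 ≤ P z y) ∧ (∀ z, ∑ y, P z y = 1) ∧
      ∀ x y, V x y = ∑ z, W x z * P z y) :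
    p / (1 + p) ≤ ε ∧ ε ≤ 1 / (1 + p) := by
  obtain ⟨hp0, hp1⟩ := hp
  obtain ⟨hε0, hε1⟩ := hε
  obtain ⟨hW1, hW2, hW3, hW4⟩ := hW
  obtain ⟨hV1, hV2, hV3, hV4⟩ := hV
  obtain ⟨P, hPnn, hPsum, hPdeg⟩ := hdeg
  have e1 := hPdeg false false
  have e2 := hPdeg false true
  have e3 := hPdeg true false
  have e4 := hPdeg true true
  simp [Fintype.sum_bool, hW1, hW2, hW3, hW4, hV1, hV2, hV3, hV4] at e1 e2 e3 e4
  have h1p : (0:ℝ) < 1 + p := by linarith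
  constructor
  · rw [div_le_iff₀ h1p]
    nlinarith [hPnn true false, hPnn true true, hPnn false false, hPnn false true]
  · rw [le_div_iff₀ h1p]
    nlinarith [hPnn true false, hPnn true true, hPnn false false, hPnn false true]
end

section
/- Let V be a BSC with crossover probability ε ∈ [0,1/2] and W any B-DMC with finite output alphabet. If 1-2ε ≤ Σ_y q_W(y)|Δ_W(y)|, then for every increasing convex function φ : [0,1] → ℝ, Σ_y q_V(y) φ(|Δ_V(y)|) ≤ Σ_y q_W(y) φ(|Δ_W(y)|). In particular, |Δ_V| is a point mass at 1-2ε and the cut criterion applies with δ = 1-2ε. -/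
open Set Finset

theorem bsc_icx_below_channel
    {𝒴 : Type*} [Fintype 𝒴]
    (ε : ℝ) (hε : ε ∈ Set.Icc (0 : ℝ) (1 / 2))
    (V : Bool → Bool → ℝ)
    (hV : V false false = 1 - ε ∧ V false true = ε ∧ V true false = ε ∧ V true true = 1 - ε)
    (W : Bool → 𝒴 → ℝ)
    (hWnonneg : ∀ x y, 0 ≤ W x y) (hWsum : ∀ x, ∑ y, W x y = 1)
    (hmean : 1 - 2 * ε ≤ ∑ y, ((W false y + W true y) / 2) *
        |(W false y - W true y) / (W false y + W true y)|) :
    ∀ φ : ℝ → ℝ, MonotoneOn φ (Icc (0 : ℝ) 1) → ConvexOn ℝ (Icc (0 : ℝ) 1) φ →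
      ∑ y : Bool, ((V false y + V true y) / 2) *
          φ |(V false y - V true y) / (V false y + V true y)|
        ≤ ∑ y, ((W false y + W true y) / 2) *
            φ |(W false y - W true y) / (W false y + W true y)| := by
  intro φ hmono hconv
  obtain ⟨hε0, hε2⟩ := hε
  obtain ⟨h1, h2, h3, h4⟩ := hV
  set w : 𝒴 → ℝ := fun y => (W false y + W true y) / 2 with hw
  set p : 𝒴 → ℝ := fun y => |(W false y - W true y) / (W false y + W true y)| with hp
  have hwnn : ∀ y ∈ Finset.univ, 0 ≤ w y := fun y _ => by
    have := hWnonneg false y; have := hWnonneg true y; simp [hw]; linarith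
  have hwsum : ∑ y : 𝒴, w y = 1 := by
    simp only [hw]
    rw [← Finset.sum_div, Finset.sum_add_distrib, hWsum, hWsum]; norm_num
  have hpmem : ∀ y ∈ Finset.univ, p y ∈ Icc (0 : ℝ) 1 := by
    intro y _
    constructor
    · exact abs_nonneg _
    · rcases eq_or_lt_of_le (add_nonneg (hWnonneg false y) (hWnonneg true y)) with h | h
      · simp [hp, ← h]
      · simp only [hp]
        rw [abs_div, abs_of_pos h, div_le_one h]
        have := hWnonneg false y; have := hWnonneg true y
        rw [abs_le]; constructor <;> linarith
  have hsum_mem : ∑ y : 𝒴, w y • p y ∈ Icc (0 : ℝ) 1 := by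
    exact (convex_Icc (0:ℝ) 1).sum_mem hwnn hwsum hpmem
  have hjensen : φ (∑ y : 𝒴, w y • p y) ≤ ∑ y : 𝒴, w y • φ (p y) :=
    hconv.map_sum_le hwnn hwsum hpmem
  have hδmem : (1 - 2 * ε) ∈ Icc (0 : ℝ) 1 := by constructor <;> linarith
  have hmean' : 1 - 2 * ε ≤ ∑ y : 𝒴, w y • p y := by
    simpa [hw, hp, smul_eq_mul] using hmean
  have hstep : φ (1 - 2 * ε) ≤ φ (∑ y : 𝒴, w y • p y) := hmono hδmem hsum_mem hmean'
  have hLHS : ∑ y : Bool, ((V false y + V true y) / 2) *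
      φ |(V false y - V true y) / (V false y + V true y)| = φ (1 - 2 * ε) := by
    rw [Fintype.sum_bool]
    rw [h1, h2, h3, h4]
    have e1 : (ε - (1 - ε)) / (ε + (1 - ε)) = -(1 - 2*ε) := by
      rw [show ε + (1 - ε) = 1 by ring]; ring
    have e2 : (1 - ε - ε) / (1 - ε + ε) = 1 - 2*ε := by
      rw [show (1:ℝ) - ε + ε = 1 by ring]; ring
    rw [e1, e2, abs_neg, abs_of_nonneg (by linarith : (0:ℝ) ≤ 1 - 2*ε)]
    rw [show ε + (1 - ε) = 1 by ring, show (1:ℝ) - ε + ε = 1 by ring]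
    ring
  rw [hLHS]
  calc φ (1 - 2 * ε) ≤ ∑ y : 𝒴, w y • φ (p y) := le_trans hstep hjensen
    _ = _ := by simp [hw, hp, smul_eq_mul]
end
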